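/- Let n, L be natural numbers with L ≥ 1. For each t < L let W_t be an n×n real matrix, let a_t : Fin n → ℝ satisfy a_t i ∈ {0,1} for every i, let A_t = Matrix.diagonal a_t, let v_t : Fin n → ℝ and α_t ≥ 0 satisfy 0 ≤ v_t i ≤ α_t for every i. Suppose x, x' : ℕ → ℝⁿ satisfy the residual recursions x_{t+1} = x_t + v_t ⊙ (A_t.mulVec (W_t.mulVec x_t)) and x'_{t+1} = x'_t + v_t ⊙ (A_t.mulVec (W_t.mulVec x'_t)) for all t < L. Then ‖x'_L − x_L‖ ≤ ‖x'_0 − x_0‖ · ∏_{t=0}^{L−1} (1 + α_t · ‖W_t‖₂), where ‖·‖ is the Euclidean norm on ℝⁿ and ‖W_t‖₂ is the ℓ² operator norm. -/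

import Mathlib

/-! The ASR bound is the product of the one-layer bounds
`‖d + v ⊙ (A W d)‖ ≤ (1 + α ‖W‖₂) ‖d‖`, applied to the difference `d = x' - x`, which obeys the
same (linear) recursion as `x` and `x'`. The one-layer bound is the triangle inequality together
with `|v i · a i| ≤ α`, which holds since `A` is a diagonal 0/1 mask. -/

noncomputable def euclNorm {n : ℕ} (y : Fin n → ℝ) : ℝ :=
  ‖(EuclideanSpace.equiv (Fin n) ℝ).symm y‖

noncomputable def l2OpNorm {m n : ℕ} (M : Matrix (Fin m) (Fin n) ℝ) : ℝ :=
  ‖LinearMap.toContinuousLinearMap (Matrix.toEuclideanLin M)‖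

def had {n : ℕ} (u w : Fin n → ℝ) : Fin n → ℝ := fun i => u i * w i

open Matrix

section euclNorm

variable {n : ℕ}

lemma euclNorm_eq_sqrt (y : Fin n → ℝ) : euclNorm y = √(∑ i, y i ^ 2) := by
  simp [euclNorm, EuclideanSpace.norm_eq]

lemma euclNorm_add_le (u w : Fin n → ℝ) : euclNorm (u + w) ≤ euclNorm u + euclNorm w := by
  simpa only [euclNorm, map_add] using norm_add_le _ _

lemma euclNorm_smul (c : ℝ) (y : Fin n → ℝ) : euclNorm (c • y) = |c| * euclNorm y := by
  simp only [euclNorm, map_smul, norm_smul, Real.norm_eq_abs]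

lemma euclNorm_le_of_abs_le {u w : Fin n → ℝ} (h : ∀ i, |u i| ≤ |w i|) :
    euclNorm u ≤ euclNorm w := by
  rw [euclNorm_eq_sqrt, euclNorm_eq_sqrt]
  exact Real.sqrt_le_sqrt (Finset.sum_le_sum fun i _ => sq_le_sq.mpr (h i))

lemma l2OpNorm_nonneg {m : ℕ} (M : Matrix (Fin m) (Fin n) ℝ) : 0 ≤ l2OpNorm M :=
  norm_nonneg _

lemma euclNorm_mulVec_le {m : ℕ} (M : Matrix (Fin m) (Fin n) ℝ) (y : Fin n → ℝ) :
    euclNorm (M *ᵥ y) ≤ l2OpNorm M * euclNorm y :=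
  (LinearMap.toContinuousLinearMap (Matrix.toEuclideanLin M)).le_opNorm _

lemma euclNorm_had_le {u : Fin n → ℝ} {c : ℝ} (hc : 0 ≤ c) (hu : ∀ i, |u i| ≤ c)
    (w : Fin n → ℝ) : euclNorm (had u w) ≤ c * euclNorm w := by
  calc euclNorm (had u w) ≤ euclNorm (c • w) := euclNorm_le_of_abs_le fun i => by
        simp only [had, Pi.smul_apply, smul_eq_mul, abs_mul, abs_of_nonneg hc]
        exact mul_le_mul_of_nonneg_right (hu i) (abs_nonneg _)
    _ = c * euclNorm w := by rw [euclNorm_smul, abs_of_nonneg hc]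

end euclNorm

section residual

variable {n : ℕ}

lemma had_diagonal_mulVec (u a w : Fin n → ℝ) :
    had u (diagonal a *ᵥ w) = had (had u a) w := by
  ext i
  simp only [had, Matrix.mulVec_diagonal, mul_assoc]

lemma residual_sub (u : Fin n → ℝ) (M : Matrix (Fin n) (Fin n) ℝ) (y y' : Fin n → ℝ) :
    (y' + had u (M *ᵥ y')) - (y + had u (M *ᵥ y)) = (y' - y) + had u (M *ᵥ (y' - y)) := by
  ext i
  simp only [had, Matrix.mulVec_sub, Pi.add_apply, Pi.sub_apply]
  ring

lemma euclNorm_residual_le {u : Fin n → ℝ} {c : ℝ} (hc : 0 ≤ c) (hu : ∀ i, |u i| ≤ c)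
    (M : Matrix (Fin n) (Fin n) ℝ) (d : Fin n → ℝ) :
    euclNorm (d + had u (M *ᵥ d)) ≤ (1 + c * l2OpNorm M) * euclNorm d := by
  have hhad : euclNorm (had u (M *ᵥ d)) ≤ c * (l2OpNorm M * euclNorm d) :=
    (euclNorm_had_le hc hu _).trans (mul_le_mul_of_nonneg_left (euclNorm_mulVec_le M d) hc)
  calc euclNorm (d + had u (M *ᵥ d)) ≤ euclNorm d + euclNorm (had u (M *ᵥ d)) :=
        euclNorm_add_le _ _
    _ ≤ euclNorm d + c * (l2OpNorm M * euclNorm d) := by linarith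
    _ = (1 + c * l2OpNorm M) * euclNorm d := by ring

lemma abs_had_le_of_mem_zero_one {v a : Fin n → ℝ} {c : ℝ} (ha : ∀ i, a i = 0 ∨ a i = 1)
    (hv : ∀ i, 0 ≤ v i ∧ v i ≤ c) (hc : 0 ≤ c) (i : Fin n) : |had v a i| ≤ c := by
  rcases ha i with h | h <;> simp [had, h, abs_of_nonneg (hv i).1, (hv i).2, hc]

end residual

lemma le_mul_prod_range_of_le_mul {e c : ℕ → ℝ} {L : ℕ} (hc : ∀ t < L, 0 ≤ c t)
    (he : ∀ t < L, e (t + 1) ≤ c t * e t) : e L ≤ e 0 * ∏ t ∈ Finset.range L, c t := by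
  induction L with
  | zero => simp
  | succ L ih =>
    calc e (L + 1) ≤ c L * e L := he L L.lt_succ_self
      _ ≤ c L * (e 0 * ∏ t ∈ Finset.range L, c t) :=
        mul_le_mul_of_nonneg_left (ih (fun t ht => hc t (by omega)) fun t ht => he t (by omega))
          (hc L L.lt_succ_self)
      _ = e 0 * ∏ t ∈ Finset.range (L + 1), c t := by rw [Finset.prod_range_succ]; ring

theorem asr_noise_propagation_general (n L : ℕ)
    (W : ℕ → Matrix (Fin n) (Fin n) ℝ)
    (a : ℕ → Fin n → ℝ) (ha : ∀ t < L, ∀ i, a t i = 0 ∨ a t i = 1)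
    (v : ℕ → Fin n → ℝ) (α : ℕ → ℝ)
    (hα : ∀ t < L, 0 ≤ α t)
    (hv : ∀ t < L, ∀ i, 0 ≤ v t i ∧ v t i ≤ α t)
    (x x' : ℕ → Fin n → ℝ)
    (hx : ∀ t < L, x (t + 1) =
      x t + had (v t) ((Matrix.diagonal (a t)).mulVec ((W t).mulVec (x t))))
    (hx' : ∀ t < L, x' (t + 1) =
      x' t + had (v t) ((Matrix.diagonal (a t)).mulVec ((W t).mulVec (x' t)))) :
    euclNorm (x' L - x L) ≤
      euclNorm (x' 0 - x 0) * ∏ t ∈ Finset.range L, (1 + α t * l2OpNorm (W t)) := by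
  have hfactor : ∀ t < L, 0 ≤ 1 + α t * l2OpNorm (W t) := fun t ht =>
    add_nonneg zero_le_one (mul_nonneg (hα t ht) (l2OpNorm_nonneg _))
  have hlayer : ∀ t < L, euclNorm (x' (t + 1) - x (t + 1)) ≤
      (1 + α t * l2OpNorm (W t)) * euclNorm (x' t - x t) := fun t ht => by
    simp only [hx t ht, hx' t ht, had_diagonal_mulVec, residual_sub]
    exact euclNorm_residual_le (hα t ht)
      (abs_had_le_of_mem_zero_one (ha t ht) (hv t ht) (hα t ht)) _ _
  exact le_mul_prod_range_of_le_mul (e := fun t => euclNorm (x' t - x t)) hfactor hlayer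

/-- The `L`-layer noise-propagation bound (Equation (9)): iterating the ASR residual
recursion `x_{t+1} = x_t + v_t ⊙ (A_t (W_t x_t))` gives
`‖x'_L − x_L‖ ≤ ‖x'_0 − x_0‖ · ∏_{t<L} (1 + α_t ‖W_t‖₂)`. -/
theorem asr_noise_propagation (n L : ℕ) (hL : 1 ≤ L)
    (W : ℕ → Matrix (Fin n) (Fin n) ℝ)
    (a : ℕ → Fin n → ℝ) (ha : ∀ t < L, ∀ i, a t i = 0 ∨ a t i = 1)
    (v : ℕ → Fin n → ℝ) (α : ℕ → ℝ)
    (hα : ∀ t < L, 0 ≤ α t)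
    (hv : ∀ t < L, ∀ i, 0 ≤ v t i ∧ v t i ≤ α t)
    (x x' : ℕ → Fin n → ℝ)
    (hx : ∀ t < L, x (t + 1) =
      x t + had (v t) ((Matrix.diagonal (a t)).mulVec ((W t).mulVec (x t))))
    (hx' : ∀ t < L, x' (t + 1) =
      x' t + had (v t) ((Matrix.diagonal (a t)).mulVec ((W t).mulVec (x' t)))) :
    euclNorm (x' L - x L) ≤
      euclNorm (x' 0 - x 0) * ∏ t ∈ Finset.range L, (1 + α t * l2OpNorm (W t)) :=
  asr_noise_propagation_general n L W a ha v α hα hv x x' hx hx'
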